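/- For any p, q, r, s ∈ ℕ with p/q ≥ 2 and r/s ≥ 2, the following are equivalent: (i) E_{p/q} ≤_𝒢 E_{r/s}; (ii) E_{p/q} ≲_𝒢 E_{r/s}; (iii) p/q ≤ r/s. -/

import Mathlib

open Filter

/-- A bundled finite simple graph. -/
structure FinGraph where
  V : Type
  [fintypeV : Fintype V]
  G : SimpleGraph V

attribute [instance] FinGraph.fintypeV

namespace FinGraph

/-- Helper constructor. -/
def mk' (V : Type) [Fintype V] (G : SimpleGraph V) : FinGraph := ⟨V, G⟩

/-- Strong product of simple graphs. -/
def strongProdAdj {α β : Type} (G : SimpleGraph α) (H : SimpleGraph β) :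
    SimpleGraph (α × β) where
  Adj x y := x ≠ y ∧ (G.Adj x.1 y.1 ∨ x.1 = y.1) ∧ (H.Adj x.2 y.2 ∨ x.2 = y.2)
  symm := ⟨by
    rintro x y ⟨hne, h1, h2⟩
    refine ⟨hne.symm, ?_, ?_⟩
    · rcases h1 with h | h
      · exact Or.inl h.symm
      · exact Or.inr h.symm
    · rcases h2 with h | h
      · exact Or.inl h.symm
      · exact Or.inr h.symm⟩
  loopless := ⟨by rintro x ⟨h, -⟩; exact h rfl⟩

/-- The `n`-th strong power of a simple graph, on vertex set `Fin n → α`. -/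
def strongPowAdj {α : Type} (G : SimpleGraph α) (n : ℕ) : SimpleGraph (Fin n → α) where
  Adj x y := x ≠ y ∧ ∀ i, G.Adj (x i) (y i) ∨ x i = y i
  symm := ⟨by
    rintro x y ⟨hne, h⟩
    refine ⟨hne.symm, fun i => ?_⟩
    rcases h i with h' | h'
    · exact Or.inl h'.symm
    · exact Or.inr h'.symm⟩
  loopless := ⟨by rintro x ⟨h, -⟩; exact h rfl⟩

/-- Disjoint union of simple graphs. -/
def disjUnionAdj {α β : Type} (G : SimpleGraph α) (H : SimpleGraph β) :
    SimpleGraph (α ⊕ β) where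
  Adj x y := (∃ a b, x = Sum.inl a ∧ y = Sum.inl b ∧ G.Adj a b) ∨
             (∃ a b, x = Sum.inr a ∧ y = Sum.inr b ∧ H.Adj a b)
  symm := ⟨by
    rintro x y (⟨a, b, rfl, rfl, h⟩ | ⟨a, b, rfl, rfl, h⟩)
    · exact Or.inl ⟨b, a, rfl, rfl, h.symm⟩
    · exact Or.inr ⟨b, a, rfl, rfl, h.symm⟩⟩
  loopless := ⟨by
    rintro x (⟨a, b, rfl, h, hadj⟩ | ⟨a, b, rfl, h, hadj⟩)
    · cases Sum.inl.inj h; exact hadj.ne rfl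
    · cases Sum.inr.inj h; exact hadj.ne rfl⟩

/-- Bundled strong product `G ⊠ H`. -/
def sprod (A B : FinGraph) : FinGraph := mk' (A.V × B.V) (strongProdAdj A.G B.G)

/-- Bundled `n`-th strong power `G^{⊠ n}`. -/
def spow (A : FinGraph) (n : ℕ) : FinGraph := mk' (Fin n → A.V) (strongPowAdj A.G n)

/-- Bundled disjoint union `G ⊔ H`. -/
def dUnion (A B : FinGraph) : FinGraph := mk' (A.V ⊕ B.V) (disjUnionAdj A.G B.G)

/-- Bundled complement graph. -/
def compl (A : FinGraph) : FinGraph := mk' A.V A.Gᶜ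

/-- Graph join `G + H`: the complement of the disjoint union of the complements. -/
def join (A B : FinGraph) : FinGraph := (A.compl.dUnion B.compl).compl

/-- The edgeless graph `E_n` on `n` vertices. -/
def edgeless (n : ℕ) : FinGraph := mk' (Fin n) ⊥

/-- `cohomLE A B`: there is a cohomomorphism from `A` to `B`, i.e. a graph homomorphism
from the complement of `A` to the complement of `B`. -/
def cohomLE (A B : FinGraph) : Prop := Nonempty (A.Gᶜ →g B.Gᶜ)

/-- Asymptotic cohomomorphism preorder: `A ≲ B` iff there is `f : ℕ → ℕ` with
`f n / n → 0` and `A^{⊠ n} ≤ B^{⊠ (n + f n)}` for all `n`. -/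
def asympCohomLE (A B : FinGraph) : Prop :=
  ∃ f : ℕ → ℕ, Tendsto (fun n => (f n : ℝ) / (n : ℝ)) atTop (nhds 0) ∧
    ∀ n, cohomLE (A.spow n) (B.spow (n + f n))

/-- The asymptotic spectrum of graphs `Δ(𝒢)`: nonnegative real graph parameters that are
normalised on edgeless graphs, multiplicative under the strong product, additive under
disjoint union, and monotone under cohomomorphism. -/
def Delta : Set (FinGraph → ℝ) :=
  { f | (∀ A, 0 ≤ f A) ∧ (∀ n : ℕ, f (edgeless n) = n) ∧
        (∀ A B, f (A.sprod B) = f A * f B) ∧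
        (∀ A B, f (A.dUnion B) = f A + f B) ∧
        (∀ A B, cohomLE A B → f A ≤ f B) }

/-- Vertex-transitivity of a bundled graph. -/
def IsVertexTransitive (A : FinGraph) : Prop :=
  ∀ u v : A.V, ∃ e : A.G ≃g A.G, e u = v

/-- Cyclic distance between `i, j ∈ {0, …, p-1}` modulo `p`. -/
def cycDist (p i j : ℕ) : ℕ := min ((p + i - j) % p) ((p + j - i) % p)

/-- The fraction graph `E_{p/q}`: vertex set `ℤ_p`, distinct vertices adjacent iff
their cyclic distance modulo `p` is strictly less than `q`. -/
def fracGraph (p q : ℕ) : FinGraph :=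
  mk' (Fin p)
    { Adj := fun i j => i ≠ j ∧ cycDist p i j < q
      symm := ⟨by
        rintro i j ⟨hne, hd⟩
        exact ⟨hne.symm, by simpa [cycDist, min_comm] using hd⟩⟩
      loopless := ⟨fun i h => h.1 rfl⟩ }

/-- The complement of the projective rank `ξ̄_f(G)`: the infimum of `d/r` over all
assignments of `r`-dimensional subspaces of `ℂ^d` to the vertices such that distinct
non-adjacent vertices receive orthogonal subspaces. -/
noncomputable def xibar (A : FinGraph) : ℝ :=
  sInf { x : ℝ | ∃ d r : ℕ, 0 < d ∧ 0 < r ∧ x = (d : ℝ) / (r : ℝ) ∧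
    ∃ W : A.V → Submodule ℂ (EuclideanSpace ℂ (Fin d)),
      (∀ v, Module.finrank ℂ (W v) = r) ∧
      ∀ v w : A.V, v ≠ w → ¬ A.G.Adj v w →
        ∀ x ∈ W v, ∀ y ∈ W w, (inner ℂ x y : ℂ) = 0 }

end FinGraph

open FinGraph

/-!
If `p/q ≤ r/s`, rounding `i ↦ ⌊i r / p⌋` turns cyclic distances `≥ q` in `ℤ_p` into cyclic
distances `≥ s` in `ℤ_r`, which is a cohomomorphism; a cohomomorphism acts coordinatewise on
strong powers, giving the asymptotic one with `f = 0`.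

Conversely, a cohomomorphism pulls cliques back to cliques. The `r^m` products of arcs of `s`
consecutive vertices are cliques of `E_{r/s}^{⊠m}` covering every vertex `s^m` times, while
cliques of `E_{p/q}^{⊠n}` have at most `q^n` vertices. Double counting gives
`p^n s^m ≤ q^n r^m`, and for `m = n + o(n)` taking `n`-th roots yields `p/q ≤ r/s`.
-/

open Finset

lemma le_of_pow_le_pow_add_of_sublinear {x y : ℝ} (hx : 0 < x) (hy : 0 < y) {f : ℕ → ℕ}
    (hf : Tendsto (fun n => (f n : ℝ) / n) atTop (nhds 0)) (h : ∀ n, x ^ n ≤ y ^ (n + f n)) :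
    x ≤ y := by
  rw [← Real.log_le_log_iff hx hy]
  have hlim : Tendsto (fun n : ℕ => (1 + (f n : ℝ) / n) * Real.log y) atTop
      (nhds (Real.log y)) := by
    simpa using (hf.const_add 1).mul_const (Real.log y)
  refine ge_of_tendsto hlim ?_
  filter_upwards [eventually_gt_atTop 0] with n hn
  have hlog := Real.log_le_log (pow_pos hx n) (h n)
  rw [Real.log_pow, Real.log_pow] at hlog
  have hn' : (0 : ℝ) < n := by exact_mod_cast hn
  calc Real.log x = n * Real.log x / n := by field_simp
    _ ≤ (n + f n : ℕ) * Real.log y / n := by gcongr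
    _ = (1 + (f n : ℝ) / n) * Real.log y := by push_cast; field_simp

namespace FinGraph

section Cohomomorphism

variable {V W : Type} {G : SimpleGraph V} {H : SimpleGraph W}

lemma isClique_preimage_of_compl_hom (φ : Gᶜ →g Hᶜ) {T : Set W} (hT : H.IsClique T) :
    G.IsClique (φ ⁻¹' T) := by
  intro x hx y hy hxy
  by_contra hnadj
  have himage := φ.map_adj ⟨hxy, hnadj⟩
  exact himage.2 (hT hx hy himage.1)

theorem card_mul_le_card_mul_of_cliqueCover [Fintype V] [DecidableEq W] {J : Type} [Fintype J]
    (φ : Gᶜ →g Hᶜ) (B : J → Finset W) (hB : ∀ j, H.IsClique (B j : Set W)) {k ω : ℕ}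
    (hk : ∀ w, k ≤ #{j | w ∈ B j})
    (hω : ∀ S : Finset V, G.IsClique (S : Set V) → #S ≤ ω) :
    Fintype.card V * k ≤ Fintype.card J * ω := by
  classical
  refine card_mul_le_card_mul (fun v j => φ v ∈ B j) (fun v _ => hk (φ v)) fun j _ => ?_
  refine hω _ ((isClique_preimage_of_compl_hom φ (hB j)).subset ?_)
  intro v hv
  simpa [bipartiteBelow] using hv

end Cohomomorphism

section StrongPower

variable {α : Type} {G : SimpleGraph α} {n : ℕ}

lemma compl_strongPowAdj_adj {x y : Fin n → α} :
    (strongPowAdj G n)ᶜ.Adj x y ↔ ∃ i, Gᶜ.Adj (x i) (y i) := by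
  simp only [SimpleGraph.compl_adj, strongPowAdj, not_and, not_forall, not_or]
  constructor
  · rintro ⟨hne, h⟩
    obtain ⟨i, hnadj, hi⟩ := h hne
    exact ⟨i, hi, hnadj⟩
  · rintro ⟨i, hi, hnadj⟩
    exact ⟨fun h => hi (congrFun h i), fun _ => ⟨i, hnadj, hi⟩⟩

lemma cohomLE.spow {A B : FinGraph} (h : cohomLE A B) (n : ℕ) :
    cohomLE (A.spow n) (B.spow n) := by
  obtain ⟨φ⟩ := h
  refine ⟨⟨fun x i => φ (x i), fun hxy => ?_⟩⟩
  obtain ⟨i, hi⟩ := compl_strongPowAdj_adj.1 hxy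
  exact compl_strongPowAdj_adj.2 ⟨i, φ.map_adj hi⟩

lemma isClique_piFinset {T : Fin n → Finset α} (hT : ∀ i, G.IsClique (T i : Set α)) :
    (strongPowAdj G n).IsClique (Fintype.piFinset T : Set (Fin n → α)) := by
  intro x hx y hy hxy
  simp only [Fintype.coe_piFinset, Set.mem_pi, Set.mem_univ, mem_coe,
    forall_const] at hx hy
  refine ⟨hxy, fun i => (eq_or_ne (x i) (y i)).elim Or.inr fun hne => Or.inl ?_⟩
  exact hT i (hx i) (hy i) hne

lemma card_le_pow_of_isClique_strongPowAdj {ω : ℕ}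
    (hω : ∀ S : Finset α, G.IsClique (S : Set α) → #S ≤ ω) {S : Finset (Fin n → α)}
    (hS : (strongPowAdj G n).IsClique (S : Set (Fin n → α))) : #S ≤ ω ^ n := by
  classical
  have hproj : ∀ i, G.IsClique (S.image (· i) : Set α) := by
    intro i
    simp only [coe_image]
    rintro _ ⟨x, hx, rfl⟩ _ ⟨y, hy, rfl⟩ hne
    exact ((hS hx hy fun h => hne (congrFun h i)).2 i).resolve_right hne
  calc #S ≤ #(Fintype.piFinset fun i => S.image (· i)) :=
        card_le_card fun x hx => Fintype.mem_piFinset.2 fun i => mem_image_of_mem _ hx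
    _ = ∏ i, #(S.image (· i)) := Fintype.card_piFinset _
    _ ≤ ∏ _i : Fin n, ω := prod_le_prod' fun i _ => hω _ (hproj i)
    _ = ω ^ n := by simp

end StrongPower

section CyclicDistance

lemma cycDist_comm (p i j : ℕ) : cycDist p i j = cycDist p j i := min_comm _ _

lemma cycDist_self (p i : ℕ) : cycDist p i i = 0 := by simp [cycDist]

lemma add_sub_mod_eq_ite {p i j : ℕ} (hi : i < p) (hj : j < p) :
    (p + i - j) % p = if j ≤ i then i - j else p + i - j := by
  split_ifs with h
  · rw [show p + i - j = i - j + p by omega, Nat.add_mod_right, Nat.mod_eq_of_lt (by omega)]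
  · exact Nat.mod_eq_of_lt (by omega)

lemma cycDist_eq_ite {p i j : ℕ} (hi : i < p) (hj : j < p) :
    cycDist p i j =
      min (if j ≤ i then i - j else p + i - j) (if i ≤ j then j - i else p + j - i) := by
  rw [cycDist, add_sub_mod_eq_ite hi hj, add_sub_mod_eq_ite hj hi]

lemma cycDist_eq_min_val_sub {p : ℕ} (i j : Fin p) :
    cycDist p i j = min (i - j).val (j - i).val := by
  simp only [cycDist, Fin.val_sub]
  congr 2 <;> omega

lemma cycDist_val_sub_right {p : ℕ} (i j a : Fin p) :
    cycDist p (i - a).val (j - a).val = cycDist p i j := by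
  have : NeZero p := ⟨a.pos.ne'⟩
  rw [cycDist_eq_min_val_sub, cycDist_eq_min_val_sub, sub_sub_sub_cancel_right,
    sub_sub_sub_cancel_right]

end CyclicDistance

section FractionGraph

variable {p q r s m n : ℕ}

lemma isClique_fracGraph_iff {S : Set (Fin r)} :
    (fracGraph r s).G.IsClique S ↔ S.Pairwise fun i j => cycDist r i j < s :=
  ⟨fun h _ hx _ hy hxy => (h hx hy hxy).2, fun h _ hx _ hy hxy => ⟨hxy, h hx hy hxy⟩⟩

lemma card_le_of_isClique_fracGraph (hq : 0 < q) (hpq : 2 * q ≤ p) {S : Finset (Fin p)}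
    (hS : (fracGraph p q).G.IsClique (S : Set (Fin p))) : #S ≤ q := by
  obtain rfl | ⟨a, ha⟩ := S.eq_empty_or_nonempty
  · simp
  have : NeZero p := ⟨a.pos.ne'⟩
  have hdist : ∀ x ∈ S, ∀ y ∈ S, x ≠ y → cycDist p (x - a).val (y - a).val < q :=
    fun x hx y hy hxy => by rw [cycDist_val_sub_right]; exact (hS hx hy hxy).2
  have hoffset : ∀ y ∈ S, (y - a).val < q ∨ p - q < (y - a).val := by
    intro y hy
    rcases eq_or_ne y a with rfl | hne
    · simp [hq]
    · have hd := hdist a ha y hy hne.symm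
      rw [sub_self, Fin.val_zero, cycDist_eq_ite (by omega) (y - a).isLt] at hd
      split_ifs at hd <;> omega
  -- shifting the offsets in `(p - q, p)` down onto `(0, q)` keeps them apart from those in `[0, q)`
  let fold : Fin p → ℕ := fun y => if (y - a).val < q then (y - a).val else (y - a).val + q - p
  calc #S ≤ #(range q) := card_le_card_of_injOn fold ?_ ?_
    _ = q := card_range q
  · intro y hy
    have hy' := hoffset y hy
    have hya := (y - a).isLt
    simp only [fold, coe_range, Set.mem_Iio]
    split_ifs <;> omega
  · intro x hx y hy hxy
    by_contra hne
    have hd := hdist x hx y hy hne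
    have hoff : (x - a).val ≠ (y - a).val := fun h => hne (sub_left_injective (Fin.ext h))
    have hxa := (x - a).isLt
    have hya := (y - a).isLt
    have hx' := hoffset x hx
    have hy' := hoffset y hy
    simp only [fold] at hxy
    rw [cycDist_eq_ite hxa hya] at hd
    split_ifs at hxy hd <;> omega


def arc (s : ℕ) (a : Fin r) : Finset (Fin r) := {t | (t - a).val < s}

lemma isClique_arc (a : Fin r) : (fracGraph r s).G.IsClique (arc s a : Set (Fin r)) := by
  rw [isClique_fracGraph_iff]
  intro x hx y hy _
  simp only [arc, coe_filter, mem_univ, true_and, Set.mem_ofPred_eq] at hx hy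
  rw [← cycDist_val_sub_right x y a, cycDist_eq_ite (x - a).isLt (y - a).isLt]
  split_ifs <;> omega

lemma card_filter_mem_arc (hsr : s ≤ r) (w : Fin r) : #{a | w ∈ arc s a} = s := by
  have : NeZero r := ⟨w.pos.ne'⟩
  calc #{a | w ∈ arc s a} = #{t : Fin r | t.val < s} :=
        card_equiv (Equiv.subLeft w) (by simp [arc])
    _ = s := by rw [Fin.card_filter_val_lt, min_eq_right hsr]

def arcBox (s : ℕ) (j : Fin m → Fin r) : Finset (Fin m → Fin r) :=
  Fintype.piFinset fun i => arc s (j i)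

lemma isClique_arcBox (j : Fin m → Fin r) :
    ((fracGraph r s).spow m).G.IsClique (arcBox s j : Set (Fin m → Fin r)) :=
  isClique_piFinset fun i => isClique_arc (j i)

lemma card_filter_mem_arcBox (hsr : s ≤ r) (w : Fin m → Fin r) :
    #{j | w ∈ arcBox s j} = s ^ m := by
  have : ({j | w ∈ arcBox s j} : Finset (Fin m → Fin r)) =
      Fintype.piFinset fun i => {a | w i ∈ arc s a} := by
    ext j
    simp [arcBox]
  simp [this, Fintype.card_piFinset, card_filter_mem_arc hsr]

theorem pow_mul_pow_le_of_cohomLE_spow (hq : 0 < q) (hpq : 2 * q ≤ p) (hsr : s ≤ r)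
    (h : cohomLE ((fracGraph p q).spow n) ((fracGraph r s).spow m)) :
    p ^ n * s ^ m ≤ r ^ m * q ^ n := by
  obtain ⟨φ⟩ := h
  let : DecidableEq ((fracGraph r s).spow m).V := inferInstanceAs (DecidableEq (Fin m → Fin r))
  have := card_mul_le_card_mul_of_cliqueCover φ (arcBox s) isClique_arcBox
    (fun w => (card_filter_mem_arcBox hsr w).ge)
    fun S hS => card_le_pow_of_isClique_strongPowAdj
      (fun T hT => card_le_of_isClique_fracGraph hq hpq hT) hS
  rw [Fintype.card_eq_nat_card, Fintype.card_eq_nat_card] at this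
  change Nat.card (Fin n → Fin p) * _ ≤ _ at this
  simpa using this

end FractionGraph

section Rounding

lemma le_cycDist_mul_div {p q r s a b : ℕ} (hfrac : p * s ≤ q * r) (ha : a < p) (hb : b < p)
    (hd : q ≤ cycDist p a b) : s ≤ cycDist r (a * r / p) (b * r / p) := by
  wlog hab : a ≤ b generalizing a b
  · rw [cycDist_comm] at hd ⊢
    exact this hb ha hd (by omega)
  obtain rfl | hs := Nat.eq_zero_or_pos s
  · exact Nat.zero_le _
  have hp : 0 < p := by omega
  have hr : 0 < r := Nat.pos_of_mul_pos_left ((Nat.mul_pos hp hs).trans_le hfrac)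
  rw [cycDist_eq_ite ha hb] at hd
  have hgap : q ≤ b - a ∧ b - a + q ≤ p := by split_ifs at hd <;> omega
  have hlow : a * r / p + s ≤ b * r / p := by
    have hs_le : s ≤ (b - a) * r / p := by
      rw [Nat.le_div_iff_mul_le hp]
      calc s * p = p * s := Nat.mul_comm _ _
        _ ≤ q * r := hfrac
        _ ≤ (b - a) * r := Nat.mul_le_mul_right r hgap.1
    calc a * r / p + s ≤ a * r / p + (b - a) * r / p := by omega
      _ ≤ (a * r + (b - a) * r) / p := Nat.div_add_div_le_add_div
      _ = b * r / p := by rw [← add_mul, Nat.add_sub_cancel' hab]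
  have hup : b * r / p + s ≤ a * r / p + r := by
    have hround := Nat.lt_mul_div_succ (a * r) hp
    have hrest : (b - a + q) * r ≤ p * r := Nat.mul_le_mul_right r hgap.2
    have hsplit : b * r = a * r + (b - a) * r := by rw [← add_mul, Nat.add_sub_cancel' hab]
    have : (b * r + s * p) / p < a * r / p + 1 + r := Nat.div_lt_of_lt_mul (by nlinarith)
    rw [Nat.add_mul_div_right _ _ hp] at this
    omega
  have hbr : b * r / p < r := Nat.div_lt_of_lt_mul (Nat.mul_lt_mul_of_pos_right hb hr)
  rw [cycDist_eq_ite (by omega) hbr]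
  split_ifs <;> omega

theorem cohomLE_fracGraph_of_mul_le {p q r s : ℕ} (hs : 0 < s) (hfrac : p * s ≤ q * r) :
    cohomLE (fracGraph p q) (fracGraph r s) := by
  have hr (i : Fin p) : 0 < r := Nat.pos_of_mul_pos_left ((Nat.mul_pos i.pos hs).trans_le hfrac)
  refine ⟨⟨fun i : Fin p => (⟨i * r / p, Nat.div_lt_of_lt_mul
    (Nat.mul_lt_mul_of_pos_right i.isLt (hr i))⟩ : Fin r), ?_⟩⟩
  rintro (i : Fin p) (j : Fin p) ⟨hne, hnadj⟩
  have hd : s ≤ cycDist r (i * r / p) (j * r / p) :=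
    le_cycDist_mul_div hfrac i.isLt j.isLt (not_lt.1 fun h => hnadj ⟨hne, h⟩)
  refine ⟨fun heq => ?_, fun hadj => hadj.2.not_ge hd⟩
  rw [Fin.mk.inj heq, cycDist_self] at hd
  omega

end Rounding

end FinGraph

/-- For fraction graphs: cohomomorphism, asymptotic cohomomorphism, and the inequality
of fractions are all equivalent. -/
theorem fracGraph_cohom_tfae (p q r s : ℕ) (hq : 0 < q) (hs : 0 < s)
    (hpq : 2 * q ≤ p) (hrs : 2 * s ≤ r) :
    List.TFAE [cohomLE (fracGraph p q) (fracGraph r s),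
               asympCohomLE (fracGraph p q) (fracGraph r s),
               (p : ℝ) / (q : ℝ) ≤ (r : ℝ) / (s : ℝ)] := by
  have hq' : (0 : ℝ) < q := by exact_mod_cast hq
  have hs' : (0 : ℝ) < s := by exact_mod_cast hs
  have hp' : (0 : ℝ) < p := by exact_mod_cast (by omega : 0 < p)
  have hr' : (0 : ℝ) < r := by exact_mod_cast (by omega : 0 < r)
  tfae_have 3 → 1 := fun h => by
    rw [div_le_div_iff₀ hq' hs'] at h
    exact cohomLE_fracGraph_of_mul_le hs (by rw [mul_comm q]; exact_mod_cast h)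
  tfae_have 1 → 2 := fun h => ⟨0, by simp, fun n => h.spow n⟩
  tfae_have 2 → 3 := fun ⟨f, hf, hcohom⟩ => by
    refine le_of_pow_le_pow_add_of_sublinear (by positivity) (by positivity) hf fun n => ?_
    rw [div_pow, div_pow, div_le_div_iff₀ (by positivity) (by positivity)]
    exact_mod_cast pow_mul_pow_le_of_cohomLE_spow hq hpq (by omega) (hcohom n)
  tfae_finish
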